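/- Let b̄ ∈ dom F. Then Hof F(b̄) = sup_{x ∈ ℝⁿ : f_{b̄}(x) > 0} d_*(0ₙ, conv{a_t : t ∈ J_{b̄}(x)})⁻¹, where f_{b̄}(x) := sup_{t∈T}(a_t'x − b̄_t) and J_{b̄}(x) := {t ∈ T : a_t'x − b̄_t = f_{b̄}(x)}. (Note that f_{b̄}(x) > 0 means x ∉ F(b̄), and in that case 0ₙ ∉ conv{a_t : t ∈ J_{b̄}(x)}.) -/

import Mathlib

open Filter Set EMetric
open scoped Topology ENNReal NNReal

/-- The feasible set `F(b) = {x ∈ ℝⁿ : aₜ'x ≤ bₜ for all t ∈ T}`. -/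
def feas {n : ℕ} {T : Type*} [TopologicalSpace T]
    (a : T → (Fin n → ℝ)) (b : C(T, ℝ)) : Set (Fin n → ℝ) :=
  {x | ∀ t : T, (∑ i, a t i * x i) ≤ b t}

/-- Distance (in `[0,+∞]`, with `d(z,∅) = +∞`) from `z` to `S ⊆ ℝⁿ` with respect to the
norm `p` on `ℝⁿ`. -/
noncomputable def pDist {n : ℕ} (p : Seminorm ℝ (Fin n → ℝ))
    (z : Fin n → ℝ) (S : Set (Fin n → ℝ)) : ℝ≥0∞ :=
  ⨅ s ∈ S, ENNReal.ofReal (p (z - s))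

/-- The dual norm `‖u‖_* = sup_{p(x) ≤ 1} |u'x|` of `u ∈ ℝⁿ`, valued in `[0,+∞]`. -/
noncomputable def dualNorm {n : ℕ} (p : Seminorm ℝ (Fin n → ℝ)) (u : Fin n → ℝ) : ℝ≥0∞ :=
  ⨆ (x : Fin n → ℝ) (_ : p x ≤ 1), ENNReal.ofReal |∑ i, u i * x i|

/-- The dual distance `d_*(0ₙ, S) = inf_{u ∈ S} ‖u‖_*`, valued in `[0,+∞]`. -/
noncomputable def dualDist0 {n : ℕ} (p : Seminorm ℝ (Fin n → ℝ)) (S : Set (Fin n → ℝ)) : ℝ≥0∞ :=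
  ⨅ u ∈ S, dualNorm p u

/-- The supremum function `f_b(x) = sup_{t ∈ T} (a_t'x − b_t)`. -/
noncomputable def fSup {n : ℕ} {T : Type*} [TopologicalSpace T]
    (a : T → (Fin n → ℝ)) (b : C(T, ℝ)) (x : Fin n → ℝ) : ℝ :=
  ⨆ t : T, ((∑ i, a t i * x i) - b t)

/-- The set `J_b(x) = {t ∈ T : a_t'x − b_t = f_b(x)}` of maximizing indices. -/
noncomputable def maxIdx {n : ℕ} {T : Type*} [TopologicalSpace T]
    (a : T → (Fin n → ℝ)) (b : C(T, ℝ)) (x : Fin n → ℝ) : Set T :=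
  {t : T | (∑ i, a t i * x i) - b t = fSup a b x}

/-- The Hoffman modulus of `F` at `b̄ ∈ dom F`:
`Hof F(b̄) = sup_{x ∈ ℝⁿ} d(x, F(b̄)) / d(b̄, F⁻¹(x))`. -/
noncomputable def hofF {n : ℕ} {T : Type*} [TopologicalSpace T] [CompactSpace T]
    (a : T → (Fin n → ℝ)) (p : Seminorm ℝ (Fin n → ℝ)) (bbar : C(T, ℝ)) : ℝ≥0∞ :=
  ⨆ x : Fin n → ℝ, pDist p x (feas a bbar) / infEdist bbar {b : C(T, ℝ) | x ∈ feas a b}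


set_option linter.unusedSectionVars false

namespace HofAux

set_option linter.unusedSectionVars false
variable {n : ℕ} {T : Type*} [MetricSpace T] [CompactSpace T]

lemma cont_t (a : T → (Fin n → ℝ)) (ha : Continuous a) (b : C(T, ℝ)) (x : Fin n → ℝ) :
    Continuous fun t => (∑ i, a t i * x i) - b t := by
  apply Continuous.sub ?_ b.continuous
  exact continuous_finset_sum _ fun i _ => ((continuous_apply i).comp ha).mul continuous_const

lemma exists_max [Nonempty T] (a : T → (Fin n → ℝ)) (ha : Continuous a) (b : C(T, ℝ))
    (x : Fin n → ℝ) :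
    ∃ t : T, ((∑ i, a t i * x i) - b t = fSup a b x) ∧
      ∀ s : T, (∑ i, a s i * x i) - b s ≤ fSup a b x := by
  obtain ⟨t₀, -, ht₀⟩ := isCompact_univ.exists_isMaxOn univ_nonempty
    ((cont_t a ha b x).continuousOn)
  have hbdd : ∀ s : T, (∑ i, a s i * x i) - b s ≤ (∑ i, a t₀ i * x i) - b t₀ :=
    fun s => (isMaxOn_iff.mp ht₀) s (mem_univ s)
  have h1 : ∀ s : T, (∑ i, a s i * x i) - b s ≤ fSup a b x := fun s =>
    le_ciSup ⟨_, fun y hy => by obtain ⟨s', rfl⟩ := hy; exact hbdd s'⟩ s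
  have h2 : fSup a b x ≤ (∑ i, a t₀ i * x i) - b t₀ := ciSup_le hbdd
  exact ⟨t₀, le_antisymm (h1 t₀) h2, h1⟩

lemma le_fSup' (a : T → (Fin n → ℝ)) (ha : Continuous a) (b : C(T, ℝ)) (x : Fin n → ℝ)
    (t : T) : (∑ i, a t i * x i) - b t ≤ fSup a b x := by
  have : Nonempty T := ⟨t⟩
  exact (exists_max a ha b x).choose_spec.2 t

lemma nonempty_T_of_pos {a : T → (Fin n → ℝ)} {b : C(T, ℝ)} {x : Fin n → ℝ}
    (h : 0 < fSup a b x) : Nonempty T := by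
  by_contra hne
  have : IsEmpty T := not_nonempty_iff.mp hne
  rw [fSup, Real.iSup_of_isEmpty] at h
  exact lt_irrefl 0 h

lemma exists_abound (a : T → (Fin n → ℝ)) (ha : Continuous a) :
    ∃ A : ℝ, 0 ≤ A ∧ ∀ (t : T) (i : Fin n), |a t i| ≤ A := by
  rcases isEmpty_or_nonempty T with hT | hT
  · exact ⟨0, le_rfl, fun t => (IsEmpty.false t).elim⟩
  · obtain ⟨t₀, -, ht₀⟩ := isCompact_univ.exists_isMaxOn univ_nonempty (ha.norm.continuousOn)
    refine ⟨‖a t₀‖, norm_nonneg _, fun t i => ?_⟩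
    have h1 : ‖a t i‖ ≤ ‖a t‖ := norm_le_pi_norm (a t) i
    have h2 : ‖a t‖ ≤ ‖a t₀‖ := (isMaxOn_iff.mp ht₀) t (mem_univ t)
    rw [Real.norm_eq_abs] at h1
    linarith

lemma dot_le (u z : Fin n → ℝ) {A : ℝ} (hA : ∀ i, |u i| ≤ A) :
    |∑ i, u i * z i| ≤ n * A * ‖z‖ := by
  rcases isEmpty_or_nonempty (Fin n) with h | h
  · have : n = 0 := by
      have := h.false; exact Nat.eq_zero_of_not_pos fun hpos => this ⟨0, hpos⟩
    subst this
    simp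
  have hA0 : 0 ≤ A := (abs_nonneg _).trans (hA (Classical.arbitrary _))
  calc |∑ i, u i * z i| ≤ ∑ i, |u i * z i| := Finset.abs_sum_le_sum_abs _ _
    _ ≤ ∑ _i : Fin n, A * ‖z‖ := by
        refine Finset.sum_le_sum fun i _ => ?_
        rw [abs_mul]
        have hz : |z i| ≤ ‖z‖ := by
          rw [← Real.norm_eq_abs]; exact norm_le_pi_norm z i
        exact mul_le_mul (hA i) hz (abs_nonneg _) hA0
    _ = n * A * ‖z‖ := by simp [Finset.sum_const, Finset.card_univ]; ring

lemma fSup_cont (a : T → (Fin n → ℝ)) (ha : Continuous a) (b : C(T, ℝ)) :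
    Continuous (fSup a b) := by
  obtain ⟨A, hA0, hA⟩ := exists_abound a ha
  have key : ∀ x y : Fin n → ℝ, fSup a b x ≤ fSup a b y + n * A * ‖x - y‖ := by
    intro x y
    rcases isEmpty_or_nonempty T with hT | hT
    · rw [fSup, fSup, Real.iSup_of_isEmpty, Real.iSup_of_isEmpty]
      positivity
    refine ciSup_le fun t => ?_
    have h1 : (∑ i, a t i * x i) - b t
        = ((∑ i, a t i * y i) - b t) + ∑ i, a t i * (x i - y i) := by
      have : ∑ i, a t i * x i = ∑ i, (a t i * y i + a t i * (x i - y i)) := by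
        refine Finset.sum_congr rfl fun i _ => by ring
      rw [this, Finset.sum_add_distrib]
      ring
    have h2 : ∑ i, a t i * (x i - y i) ≤ n * A * ‖x - y‖ := by
      have := dot_le (a t) (x - y) (fun i => hA t i)
      have heq : ∀ i, (x - y) i = x i - y i := fun i => rfl
      calc ∑ i, a t i * (x i - y i) = ∑ i, a t i * (x - y) i := by
            exact Finset.sum_congr rfl fun i _ => by rw [heq]
        _ ≤ |∑ i, a t i * (x - y) i| := le_abs_self _
        _ ≤ n * A * ‖x - y‖ := this
    have h3 := le_fSup' a ha b y t
    linarith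
  have lip : LipschitzWith (Real.toNNReal (n * A)) (fSup a b) := by
    refine LipschitzWith.of_dist_le_mul fun x y => ?_
    rw [Real.dist_eq, Real.coe_toNNReal _ (by positivity), dist_eq_norm]
    rw [abs_sub_le_iff]
    constructor
    · have := key x y; linarith
    · have := key y x; rw [norm_sub_rev] at this; linarith
  exact lip.continuous

lemma mem_feas_iff (a : T → (Fin n → ℝ)) (ha : Continuous a) (b : C(T, ℝ)) (x : Fin n → ℝ) :
    x ∈ feas a b ↔ fSup a b x ≤ 0 := by
  constructor
  · intro hx
    exact Real.iSup_le (fun t => sub_nonpos.mpr (hx t)) le_rfl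
  · intro h t
    have := le_fSup' a ha b x t
    linarith

lemma p_sum_le (p : Seminorm ℝ (Fin n → ℝ)) (z : Fin n → ℝ) :
    p z ≤ (∑ i, p (Pi.single i 1)) * ‖z‖ := by
  have hsingle : ∀ (i : Fin n) (r : ℝ),
      (Pi.single i r : Fin n → ℝ) = r • (Pi.single i 1 : Fin n → ℝ) := by
    intro i r
    funext j
    simp [Pi.single_apply, Pi.smul_apply, mul_ite]
  have hsum : ∀ (s : Finset (Fin n)) (g : Fin n → (Fin n → ℝ)),
      p (∑ i ∈ s, g i) ≤ ∑ i ∈ s, p (g i) := by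
    intro s g
    classical
    induction s using Finset.induction with
    | empty => simp
    | insert _ _ hns ih =>
        rw [Finset.sum_insert hns, Finset.sum_insert hns]
        exact (map_add_le_add p _ _).trans (add_le_add le_rfl ih)
  calc p z = p (∑ i, Pi.single i (z i)) := by rw [Finset.univ_sum_single]
    _ ≤ ∑ i, p (Pi.single i (z i)) := hsum _ _
    _ ≤ ∑ i, p (Pi.single i 1) * ‖z‖ := by
        refine Finset.sum_le_sum fun i _ => ?_
        rw [hsingle i (z i), map_smul_eq_mul]
        have h1 : |z i| ≤ ‖z‖ := by rw [← Real.norm_eq_abs]; exact norm_le_pi_norm z i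
        have h2 : (0:ℝ) ≤ p (Pi.single i 1) := apply_nonneg _ _
        rw [Real.norm_eq_abs, mul_comm]
        exact mul_le_mul_of_nonneg_left h1 h2
    _ = (∑ i, p (Pi.single i 1)) * ‖z‖ := by rw [Finset.sum_mul]

lemma p_cont (p : Seminorm ℝ (Fin n → ℝ)) : Continuous fun z => (p z : ℝ) := by
  set C := ∑ i, p (Pi.single i 1) with hC
  have hC0 : 0 ≤ C := Finset.sum_nonneg fun i _ => apply_nonneg p _
  have hdiff : ∀ x y : Fin n → ℝ, p x - p y ≤ C * ‖x - y‖ := by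
    intro x y
    have h1 : p x ≤ p (x - y) + p y := by
      calc p x = p ((x - y) + y) := by rw [sub_add_cancel]
        _ ≤ p (x - y) + p y := map_add_le_add p _ _
    have h2 := p_sum_le p (x - y)
    linarith
  refine (LipschitzWith.of_dist_le_mul (K := Real.toNNReal C) fun x y => ?_).continuous
  rw [Real.dist_eq, Real.coe_toNNReal _ hC0, dist_eq_norm, abs_sub_le_iff]
  refine ⟨hdiff x y, ?_⟩
  have := hdiff y x
  rw [norm_sub_rev] at this
  linarith

lemma p_lower (p : Seminorm ℝ (Fin n → ℝ)) (hp : ∀ x, p x = 0 → x = 0) :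
    ∃ m : ℝ, 0 < m ∧ ∀ z, m * ‖z‖ ≤ p z := by
  rcases isEmpty_or_nonempty (Fin n) with hn | hn
  · refine ⟨1, one_pos, fun z => ?_⟩
    have hz : z = 0 := funext fun i => (IsEmpty.false i).elim
    simp [hz]
  · have hnt : Nontrivial (Fin n → ℝ) := by
      refine ⟨0, Function.const _ 1, fun h => ?_⟩
      have := congrFun h (Classical.arbitrary _)
      simp [Function.const] at this
    have hsph : (Metric.sphere (0 : Fin n → ℝ) 1).Nonempty :=
      NormedSpace.sphere_nonempty.mpr zero_le_one
    obtain ⟨z₀, hz₀mem, hz₀⟩ := (isCompact_sphere (0 : Fin n → ℝ) 1).exists_isMinOn hsph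
      ((p_cont p).continuousOn)
    have hz₀min : ∀ w ∈ Metric.sphere (0 : Fin n → ℝ) 1, p z₀ ≤ p w :=
      fun w hw => (isMinOn_iff.mp hz₀) w hw
    have hz₀norm : ‖z₀‖ = 1 := by simpa using hz₀mem
    have hz₀ne : z₀ ≠ 0 := by
      intro h; rw [h] at hz₀norm; simp at hz₀norm
    have hm : 0 < p z₀ := by
      rcases (apply_nonneg p z₀).lt_or_eq with h | h
      · exact h
      · exact absurd (hp z₀ h.symm) hz₀ne
    refine ⟨p z₀, hm, fun z => ?_⟩
    rcases eq_or_ne z 0 with rfl | hz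
    · simp
    · have hnz : 0 < ‖z‖ := norm_pos_iff.mpr hz
      have hmem : ‖z‖⁻¹ • z ∈ Metric.sphere (0 : Fin n → ℝ) 1 := by
        simp [norm_smul, abs_of_pos (inv_pos.mpr hnz), inv_mul_cancel₀ hnz.ne']
      have h1 := hz₀min _ hmem
      rw [map_smul_eq_mul, Real.norm_eq_abs, abs_of_pos (inv_pos.mpr hnz)] at h1
      calc p z₀ * ‖z‖ ≤ (‖z‖⁻¹ * p z) * ‖z‖ := by nlinarith
        _ = p z := by field_simp

lemma pDist_le_of_mem (p : Seminorm ℝ (Fin n → ℝ)) {x s : Fin n → ℝ} {S : Set (Fin n → ℝ)}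
    (hs : s ∈ S) : pDist p x S ≤ ENNReal.ofReal (p (x - s)) := by
  simp only [pDist]
  exact iInf₂_le s hs

lemma pDist_zero_of_mem (p : Seminorm ℝ (Fin n → ℝ)) {x : Fin n → ℝ} {S : Set (Fin n → ℝ)}
    (hx : x ∈ S) : pDist p x S = 0 := by
  refine le_antisymm ?_ (zero_le)
  have h := pDist_le_of_mem p (x := x) hx
  simpa using h

lemma denom_eq (a : T → (Fin n → ℝ)) (ha : Continuous a) (bbar : C(T, ℝ)) (x : Fin n → ℝ) :
    infEdist bbar {b : C(T, ℝ) | x ∈ feas a b}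
      = ENNReal.ofReal (max (fSup a bbar x) 0) := by
  apply le_antisymm
  · set c := max (fSup a bbar x) 0 with hcdef
    have hc : 0 ≤ c := le_max_right _ _
    set b : C(T, ℝ) := bbar + ContinuousMap.const T c with hbdef
    have hb : b ∈ {b : C(T, ℝ) | x ∈ feas a b} := by
      intro t
      have h1 : (∑ i, a t i * x i) - bbar t ≤ c :=
        (le_fSup' a ha bbar x t).trans (le_max_left _ _)
      have h2 : b t = bbar t + c := rfl
      rw [h2]; linarith
    refine (infEdist_le_edist_of_mem hb).trans ?_
    rw [edist_dist]
    apply ENNReal.ofReal_le_ofReal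
    rw [ContinuousMap.dist_le hc]
    intro t
    have h2 : b t = bbar t + c := rfl
    rw [h2, Real.dist_eq]
    simp [abs_of_nonneg hc]
  · refine le_infEdist.mpr ?_
    intro b hb
    rw [edist_dist]
    apply ENNReal.ofReal_le_ofReal
    apply max_le ?_ dist_nonneg
    refine Real.iSup_le (fun t => ?_) dist_nonneg
    have h1 : (∑ i, a t i * x i) ≤ b t := hb t
    have h2 : dist (bbar t) (b t) ≤ dist bbar b := ContinuousMap.dist_apply_le_dist t
    have h3 : b t - bbar t ≤ |bbar t - b t| := by
      rw [abs_sub_comm]; exact le_abs_self _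
    rw [Real.dist_eq] at h2
    linarith

lemma dualNorm_le_of_forall {p : Seminorm ℝ (Fin n → ℝ)} {u : Fin n → ℝ} {c : ℝ}
    (h : ∀ z, p z ≤ 1 → |∑ i, u i * z i| ≤ c) : dualNorm p u ≤ ENNReal.ofReal c := by
  simp only [dualNorm]
  exact iSup₂_le fun z hz => ENNReal.ofReal_le_ofReal (h z hz)

lemma dualNorm_lt_top (p : Seminorm ℝ (Fin n → ℝ)) (hp : ∀ x, p x = 0 → x = 0)
    (u : Fin n → ℝ) : dualNorm p u < ⊤ := by
  obtain ⟨m, hm, hmp⟩ := p_lower p hp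
  have h : dualNorm p u ≤ ENNReal.ofReal (n * ‖u‖ * (1/m)) := by
    refine dualNorm_le_of_forall fun z hz => ?_
    have h1 : |∑ i, u i * z i| ≤ n * ‖u‖ * ‖z‖ :=
      dot_le u z (fun i => by rw [← Real.norm_eq_abs]; exact norm_le_pi_norm u i)
    have h2 : ‖z‖ ≤ 1/m := by
      have h4 := hmp z
      rw [le_div_iff₀ hm]
      nlinarith
    have h3 : (0:ℝ) ≤ (n : ℝ) * ‖u‖ := by positivity
    nlinarith [norm_nonneg z]
  exact h.trans_lt ENNReal.ofReal_lt_top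

lemma ratio_ge (a : T → (Fin n → ℝ)) (ha : Continuous a) (p : Seminorm ℝ (Fin n → ℝ))
    (hp : ∀ x, p x = 0 → x = 0) (bbar : C(T, ℝ)) (hdom : (feas a bbar).Nonempty)
    {x : Fin n → ℝ} (hx : 0 < fSup a bbar x) :
    (dualDist0 p (convexHull ℝ (a '' maxIdx a bbar x)))⁻¹
      ≤ pDist p x (feas a bbar) / ENNReal.ofReal (fSup a bbar x) := by
  haveI : Nonempty T := nonempty_T_of_pos hx
  set K := convexHull ℝ (a '' maxIdx a bbar x) with hK
  set N := pDist p x (feas a bbar) with hN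
  obtain ⟨s₀, hs₀⟩ := hdom
  have hNlt : N < ⊤ := (pDist_le_of_mem p hs₀).trans_lt ENNReal.ofReal_lt_top
  -- subgradient inequality
  have hKsub : ∀ u ∈ K, ∀ s ∈ feas a bbar, fSup a bbar x ≤ ∑ i, u i * (x i - s i) := by
    intro u hu s hs
    have hG : K ⊆ {u : Fin n → ℝ | fSup a bbar x ≤ ∑ i, u i * (x i - s i)} := by
      apply convexHull_min
      · rintro _ ⟨t, ht, rfl⟩
        have h1 : (∑ i, a t i * x i) - bbar t = fSup a bbar x := ht
        have h2 : (∑ i, a t i * s i) ≤ bbar t := hs t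
        have h3 : ∑ i, a t i * (x i - s i)
            = (∑ i, a t i * x i) - ∑ i, a t i * s i := by
          rw [← Finset.sum_sub_distrib]
          exact Finset.sum_congr rfl fun i _ => by ring
        show fSup a bbar x ≤ ∑ i, a t i * (x i - s i)
        rw [h3]; linarith
      · intro u1 h1 u2 h2 α β hα hβ hαβ
        simp only [mem_setOf_eq] at h1 h2 ⊢
        have h3 : ∑ i, (α • u1 + β • u2) i * (x i - s i)
            = α * (∑ i, u1 i * (x i - s i)) + β * (∑ i, u2 i * (x i - s i)) := by
          rw [Finset.mul_sum, Finset.mul_sum, ← Finset.sum_add_distrib]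
          refine Finset.sum_congr rfl fun i _ => ?_
          simp only [Pi.add_apply, Pi.smul_apply, smul_eq_mul]
          ring
        rw [h3]
        nlinarith [mul_le_mul_of_nonneg_left h1 hα, mul_le_mul_of_nonneg_left h2 hβ]
    exact hG hu
  -- per-u bound
  have hbound : ∀ u ∈ K, dualNorm p u ≠ 0 ∧
      ENNReal.ofReal (fSup a bbar x) / dualNorm p u ≤ N := by
    intro u hu
    have hmain : ∀ s ∈ feas a bbar,
        ENNReal.ofReal (fSup a bbar x) / dualNorm p u ≤ ENNReal.ofReal (p (x - s)) ∧
          dualNorm p u ≠ 0 := by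
      intro s hs
      have hzp : 0 < p (x - s) := by
        rcases (apply_nonneg p (x - s)).lt_or_eq with h | h
        · exact h
        · exfalso
          have hxs : x - s = 0 := hp _ h.symm
          have hxe : ∀ i, x i - s i = 0 := fun i => congrFun hxs i
          have := hKsub u hu s hs
          rw [Finset.sum_congr rfl (fun i _ => by rw [hxe i, mul_zero])] at this
          simp at this
          linarith
      set w := (p (x - s))⁻¹ • (x - s) with hw
      have hpw : p w ≤ 1 := by
        rw [hw, map_smul_eq_mul, Real.norm_eq_abs, abs_of_pos (inv_pos.mpr hzp),
          inv_mul_cancel₀ hzp.ne']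
      have hsum : ∑ i, u i * w i = (p (x - s))⁻¹ * ∑ i, u i * (x i - s i) := by
        rw [Finset.mul_sum]
        refine Finset.sum_congr rfl fun i _ => ?_
        have : w i = (p (x - s))⁻¹ * (x i - s i) := rfl
        rw [this]; ring
      have h1 : ENNReal.ofReal |∑ i, u i * w i| ≤ dualNorm p u := by
        simp only [dualNorm]
        exact le_iSup₂ (f := fun z (_ : p z ≤ 1) => ENNReal.ofReal |∑ i, u i * z i|) w hpw
      have h2 : fSup a bbar x ≤ |∑ i, u i * w i| * p (x - s) := by
        have h3 := hKsub u hu s hs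
        have h4 : |∑ i, u i * w i| * p (x - s) = |∑ i, u i * (x i - s i)| := by
          rw [hsum, abs_mul, abs_of_pos (inv_pos.mpr hzp)]
          field_simp
        rw [h4]
        exact h3.trans (le_abs_self _)
      have h5 : ENNReal.ofReal (fSup a bbar x) ≤ dualNorm p u * ENNReal.ofReal (p (x - s)) := by
        calc ENNReal.ofReal (fSup a bbar x)
            ≤ ENNReal.ofReal (|∑ i, u i * w i| * p (x - s)) := ENNReal.ofReal_le_ofReal h2
          _ = ENNReal.ofReal |∑ i, u i * w i| * ENNReal.ofReal (p (x - s)) :=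
              ENNReal.ofReal_mul (abs_nonneg _)
          _ ≤ dualNorm p u * ENNReal.ofReal (p (x - s)) := mul_le_mul_left h1 _
      have hdN0 : dualNorm p u ≠ 0 := by
        intro h0
        rw [h0, zero_mul] at h5
        exact absurd (le_antisymm h5 (zero_le)) (ENNReal.ofReal_pos.mpr hx).ne'
      refine ⟨?_, hdN0⟩
      rw [ENNReal.div_le_iff_le_mul (Or.inl hdN0)
        (Or.inr (ENNReal.ofReal_pos.mpr hzp).ne')]
      rw [mul_comm]
      exact h5
    refine ⟨(hmain s₀ hs₀).2, ?_⟩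
    rw [hN]
    simp only [pDist]
    exact le_iInf₂ fun s hs => (hmain s hs).1
  have hN0 : 0 < N := by
    obtain ⟨t₀, ht₀, -⟩ := exists_max a ha bbar x
    have hu₀ : a t₀ ∈ K := subset_convexHull ℝ _ (mem_image_of_mem a ht₀)
    have h6 := (hbound _ hu₀).2
    have h7 : 0 < ENNReal.ofReal (fSup a bbar x) / dualNorm p (a t₀) :=
      ENNReal.div_pos (ENNReal.ofReal_pos.mpr hx).ne' (dualNorm_lt_top p hp _).ne
    exact h7.trans_le h6
  -- dd bound
  have hdd : ENNReal.ofReal (fSup a bbar x) / N ≤ dualDist0 p K := by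
    simp only [dualDist0]
    refine le_iInf₂ fun u hu => ?_
    obtain ⟨hdN0, h5⟩ := hbound u hu
    have h6 : ENNReal.ofReal (fSup a bbar x) ≤ N * dualNorm p u := by
      rw [← ENNReal.div_le_iff_le_mul (Or.inl hdN0) (Or.inr hN0.ne')]
      exact h5
    rw [ENNReal.div_le_iff_le_mul (Or.inl hN0.ne') (Or.inr hdN0)]
    rw [mul_comm]
    exact h6
  have h8 := ENNReal.inv_le_inv.mpr hdd
  rw [ENNReal.inv_div (Or.inr ENNReal.ofReal_ne_top)
    (Or.inr (ENNReal.ofReal_pos.mpr hx).ne')] at h8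
  exact le_trans h8 le_rfl

lemma maxIdx_closed (a : T → (Fin n → ℝ)) (ha : Continuous a) (bbar : C(T, ℝ))
    (y : Fin n → ℝ) : IsClosed (maxIdx a bbar y) := by
  have : maxIdx a bbar y
      = (fun t => (∑ i, a t i * y i) - bbar t) ⁻¹' {fSup a bbar y} := rfl
  rw [this]
  exact IsClosed.preimage (cont_t a ha bbar y) isClosed_singleton

lemma exists_descent_dir (a : T → (Fin n → ℝ)) (ha : Continuous a)
    (p : Seminorm ℝ (Fin n → ℝ)) (hp : ∀ x, p x = 0 → x = 0) (bbar : C(T, ℝ))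
    {y : Fin n → ℝ} (hy : 0 < fSup a bbar y) {c c' : ℝ} (hc : 0 < c) (hcc' : c < c')
    (hcon : ∀ u ∈ convexHull ℝ (a '' maxIdx a bbar y), ENNReal.ofReal c' < dualNorm p u) :
    ∃ d : Fin n → ℝ, p d = 1 ∧ ∃ δ : ℝ, 0 < δ ∧
      ∀ t ∈ maxIdx a bbar y, (∑ i, a t i * d i) ≤ -c - δ := by
  haveI : Nonempty T := nonempty_T_of_pos hy
  classical
  obtain ⟨m, hm, hmp⟩ := p_lower p hp
  set J := maxIdx a bbar y with hJ
  set K := convexHull ℝ (a '' J) with hKdef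
  set Kc := closure K with hKc
  set D : Set (Fin n → ℝ) := {u | ∀ z, |∑ i, u i * z i| ≤ c * p z} with hD
  -- basic properties of D
  have hD0 : (0 : Fin n → ℝ) ∈ D := by
    intro z
    simp only [Pi.zero_apply, zero_mul, Finset.sum_const_zero, abs_zero]
    positivity
  have hDclosed : IsClosed D := by
    have : D = ⋂ z : Fin n → ℝ, {u : Fin n → ℝ | |∑ i, u i * z i| ≤ c * p z} := by
      ext u; simp [hD, Set.mem_iInter]
    rw [this]
    refine isClosed_iInter fun z => isClosed_le ?_ continuous_const
    exact (continuous_finset_sum _ fun i _ => (continuous_apply i).mul continuous_const).abs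
  have hDbdd : ∃ R : ℝ, D ⊆ Metric.closedBall 0 R := by
    refine ⟨c * ((∑ i, p (Pi.single i 1)) + 1), fun u hu => ?_⟩
    rw [Metric.mem_closedBall, dist_zero_right]
    have hC0 : 0 ≤ ∑ i, p (Pi.single i 1) := Finset.sum_nonneg fun i _ => apply_nonneg p _
    refine pi_norm_le_iff_of_nonneg (by positivity) |>.mpr fun i => ?_
    have h1 : |∑ j, u j * (Pi.single i 1 : Fin n → ℝ) j| ≤ c * p (Pi.single i 1) := hu _
    have h2 : ∑ j, u j * (Pi.single i 1 : Fin n → ℝ) j = u i := by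
      rw [Finset.sum_eq_single i]
      · simp
      · intro j _ hj; simp [Pi.single_apply, hj]
      · intro h; exact absurd (Finset.mem_univ i) h
    rw [h2] at h1
    have h3 : p (Pi.single i 1) ≤ (∑ j, p (Pi.single j 1)) :=
      Finset.single_le_sum (f := fun j => p (Pi.single j 1)) (fun j _ => apply_nonneg p _)
        (Finset.mem_univ i)
    rw [Real.norm_eq_abs]
    nlinarith
  have hDcpt : IsCompact D := by
    obtain ⟨R, hR⟩ := hDbdd
    exact (isCompact_closedBall 0 R).of_isClosed_subset hDclosed hR
  have hDconv : Convex ℝ D := by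
    intro u1 h1 u2 h2 α β hα hβ hαβ
    intro z
    have hs : ∑ i, (α • u1 + β • u2) i * z i
        = α * (∑ i, u1 i * z i) + β * (∑ i, u2 i * z i) := by
      rw [Finset.mul_sum, Finset.mul_sum, ← Finset.sum_add_distrib]
      refine Finset.sum_congr rfl fun i _ => ?_
      simp only [Pi.add_apply, Pi.smul_apply, smul_eq_mul]
      ring
    rw [hs]
    have b1 := h1 z
    have b2 := h2 z
    calc |α * (∑ i, u1 i * z i) + β * (∑ i, u2 i * z i)|
        ≤ |α * (∑ i, u1 i * z i)| + |β * (∑ i, u2 i * z i)| := abs_add_le _ _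
      _ = α * |∑ i, u1 i * z i| + β * |∑ i, u2 i * z i| := by
          rw [abs_mul, abs_mul, abs_of_nonneg hα, abs_of_nonneg hβ]
      _ ≤ α * (c * p z) + β * (c * p z) := by
          exact add_le_add (mul_le_mul_of_nonneg_left b1 hα) (mul_le_mul_of_nonneg_left b2 hβ)
      _ = c * p z := by rw [← add_mul, hαβ, one_mul]
  -- K compact closure
  have hJcpt : IsCompact (a '' J) := ((maxIdx_closed a ha bbar y).isCompact).image ha
  have hKcConv : Convex ℝ Kc := (convex_convexHull ℝ _).closure
  have hKcCpt : IsCompact Kc := by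
    have hbdd : Bornology.IsBounded K := isBounded_convexHull.mpr hJcpt.isBounded
    obtain ⟨R, hR⟩ := hbdd.closure.subset_closedBall 0
    exact (isCompact_closedBall 0 R).of_isClosed_subset isClosed_closure hR
  have hJne : J.Nonempty := by
    obtain ⟨t₀, ht₀, -⟩ := exists_max a ha bbar y
    exact ⟨t₀, ht₀⟩
  have hKcne : Kc.Nonempty := by
    obtain ⟨t₀, ht₀⟩ := hJne
    exact ⟨a t₀, subset_closure (subset_convexHull ℝ _ (mem_image_of_mem a ht₀))⟩
  -- disjointness
  have hdisj : ∀ u ∈ Kc, u ∉ D := by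
    intro u huK huD
    set ε := m * (c' - c) / (n + 1) with hε
    have hεpos : 0 < ε := by
      apply div_pos (mul_pos hm (by linarith)) (by positivity)
    obtain ⟨v, hvK, hvd⟩ := Metric.mem_closure_iff.mp huK ε hεpos
    refine absurd ?_ (not_le.mpr (hcon v hvK))
    refine dualNorm_le_of_forall fun z hz => ?_
    have hvu : ‖v - u‖ < ε := by
      rw [← dist_eq_norm, dist_comm]
      exact hvd
    have hsplit : ∑ i, v i * z i = (∑ i, u i * z i) + ∑ i, (v - u) i * z i := by
      rw [← Finset.sum_add_distrib]
      refine Finset.sum_congr rfl fun i _ => ?_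
      have : (v - u) i = v i - u i := rfl
      rw [this]; ring
    have h1 : |∑ i, v i * z i| ≤ |∑ i, u i * z i| + |∑ i, (v - u) i * z i| := by
      rw [hsplit]; exact abs_add_le _ _
    have h2 : |∑ i, u i * z i| ≤ c * p z := huD z
    have h3 : |∑ i, (v - u) i * z i| ≤ n * ‖v - u‖ * ‖z‖ :=
      dot_le (v - u) z (fun i => by rw [← Real.norm_eq_abs]; exact norm_le_pi_norm (v - u) i)
    have h4 : ‖z‖ ≤ 1/m := by
      have h5 := hmp z
      rw [le_div_iff₀ hm]
      nlinarith
    have h6 : (n:ℝ) * ‖v - u‖ * ‖z‖ ≤ n * ε * (1/m) := by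
      have hn0 : (0:ℝ) ≤ n := Nat.cast_nonneg n
      have hz0 : (0:ℝ) ≤ ‖z‖ := norm_nonneg _
      have s1 := mul_le_mul_of_nonneg_right (mul_le_mul_of_nonneg_left hvu.le hn0) hz0
      have hεn : (0:ℝ) ≤ (n:ℝ) * ε := by positivity
      have s2 := mul_le_mul_of_nonneg_left h4 hεn
      calc (n:ℝ) * ‖v - u‖ * ‖z‖ ≤ (n:ℝ) * ε * ‖z‖ := by
            calc (n:ℝ) * ‖v - u‖ * ‖z‖ = (n:ℝ) * ‖v - u‖ * ‖z‖ := rfl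
              _ ≤ (n:ℝ) * ε * ‖z‖ := s1
        _ ≤ (n:ℝ) * ε * (1/m) := s2
    have h7 : (n:ℝ) * ε * (1/m) = (n / (n+1)) * (c' - c) := by
      rw [hε]; field_simp
    have h8 : (n:ℝ) / (n+1) ≤ 1 := by
      rw [div_le_one (by positivity)]; linarith
    have h9 : c * p z ≤ c := by nlinarith [apply_nonneg p z]
    nlinarith
  -- Minkowski difference
  set C : Set (Fin n → ℝ) :=
    (fun q : (Fin n → ℝ) × (Fin n → ℝ) => q.1 - q.2) '' (Kc ×ˢ D) with hCdef
  have hCcpt : IsCompact C := (hKcCpt.prod hDcpt).image (continuous_fst.sub continuous_snd)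
  have hCconv : Convex ℝ C := by
    rintro q1 ⟨⟨k1, d1⟩, ⟨hk1, hd1⟩, rfl⟩ q2 ⟨⟨k2, d2⟩, ⟨hk2, hd2⟩, rfl⟩ α β hα hβ hαβ
    refine ⟨(α • k1 + β • k2, α • d1 + β • d2),
      ⟨hKcConv hk1 hk2 hα hβ hαβ, hDconv hd1 hd2 hα hβ hαβ⟩, ?_⟩
    simp only
    module
  have h0C : (0 : Fin n → ℝ) ∉ C := by
    rintro ⟨⟨k, d⟩, ⟨hk, hd⟩, h0⟩
    simp only at h0
    have : k = d := by
      have := sub_eq_zero.mp h0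
      exact this
    exact hdisj k hk (this ▸ hd)
  -- separation
  obtain ⟨φ, u₀, hφ0, hφ⟩ := geometric_hahn_banach_point_closed hCconv hCcpt.isClosed h0C
  have hu₀ : 0 < u₀ := by
    have : φ 0 = 0 := map_zero φ
    rw [this] at hφ0
    exact hφ0
  have hsep : ∀ k ∈ Kc, ∀ d ∈ D, u₀ < φ k - φ d := by
    intro k hk d hd
    have := hφ (k - d) ⟨(k, d), ⟨hk, hd⟩, rfl⟩
    rwa [map_sub] at this
  set v : Fin n → ℝ := fun i => φ (Pi.single i 1) with hv
  have hsingle : ∀ (i : Fin n) (r : ℝ),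
      (Pi.single i r : Fin n → ℝ) = r • (Pi.single i 1 : Fin n → ℝ) := by
    intro i r
    funext j
    simp [Pi.single_apply, Pi.smul_apply, mul_ite]
  have hφeq : ∀ w : Fin n → ℝ, φ w = ∑ i, w i * v i := by
    intro w
    conv_lhs => rw [← Finset.univ_sum_single w]
    rw [map_sum]
    refine Finset.sum_congr rfl fun i _ => ?_
    rw [hsingle i (w i), map_smul, smul_eq_mul, hv]
  have hv0 : v ≠ 0 := by
    intro h
    obtain ⟨k₀, hk₀⟩ := hKcne
    have h1 := hsep k₀ hk₀ 0 hD0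
    rw [map_zero, sub_zero, hφeq k₀, h] at h1
    simp at h1
    linarith
  have hpv : 0 < p v := by
    rcases (apply_nonneg p v).lt_or_eq with h | h
    · exact h
    · exact absurd (hp v h.symm) hv0
  -- Hahn-Banach norming functional
  have hH : ∀ r : ℝ, r • v = 0 → r • (p v : ℝ) = 0 := by
    intro r hr
    rcases smul_eq_zero.mp hr with h | h
    · rw [h, zero_smul]
    · exact absurd h hv0
  obtain ⟨g, hg_eq, hg_le⟩ := exists_extension_of_le_sublinear
    (LinearPMap.mkSpanSingleton' v (p v) hH) (fun z => (p z : ℝ))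
    (fun r hr z => by
      show (p (r • z) : ℝ) = r * p z
      rw [map_smul_eq_mul, Real.norm_eq_abs, abs_of_pos hr])
    (fun z w => map_add_le_add p z w)
    (by
      rintro ⟨z, hz⟩
      have hz' : z ∈ (Submodule.span ℝ {v} : Submodule ℝ (Fin n → ℝ)) := by
        have hdom := LinearPMap.domain_mkSpanSingleton (R := ℝ) (σ := RingHom.id ℝ) v (p v : ℝ) hH
        rw [hdom] at hz
        exact hz
      obtain ⟨r, hr⟩ := Submodule.mem_span_singleton.mp hz'
      have hmem : r • v ∈ (LinearPMap.mkSpanSingleton' (σ := RingHom.id ℝ) v (p v : ℝ) hH).domain := by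
        rw [hr]; exact hz
      have : (⟨z, hz⟩ : (LinearPMap.mkSpanSingleton' (σ := RingHom.id ℝ) v (p v : ℝ) hH).domain)
          = ⟨r • v, hmem⟩ := Subtype.ext hr.symm
      rw [this, LinearPMap.mkSpanSingleton'_apply]
      show r • (p v : ℝ) ≤ p (r • v)
      rw [smul_eq_mul, map_smul_eq_mul, Real.norm_eq_abs]
      exact mul_le_mul_of_nonneg_right (le_abs_self r) (apply_nonneg p v))
  have hgv : g v = p v := by
    have hmem : v ∈ (LinearPMap.mkSpanSingleton' (σ := RingHom.id ℝ) v (p v : ℝ) hH).domain := by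
      rw [LinearPMap.domain_mkSpanSingleton]
      exact Submodule.mem_span_singleton_self v
    have := hg_eq ⟨v, hmem⟩
    rw [LinearPMap.mkSpanSingleton'_apply_self] at this
    exact this
  have habs_g : ∀ z, |g z| ≤ p z := by
    intro z
    rw [abs_le]
    constructor
    · have h1 := hg_le (-z)
      rw [map_neg] at h1
      have h2 : p (-z) = p z := map_neg_eq_map p z
      linarith
    · exact hg_le z
  set W : Fin n → ℝ := fun i => g (Pi.single i 1) with hW
  have hg_expand : ∀ z : Fin n → ℝ, g z = ∑ i, z i * W i := by
    intro z
    conv_lhs => rw [← Finset.univ_sum_single z]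
    rw [map_sum]
    refine Finset.sum_congr rfl fun i _ => ?_
    rw [hsingle i (z i), map_smul, smul_eq_mul, hW]
  have hcW : c • W ∈ D := by
    intro z
    have h1 : ∑ i, (c • W) i * z i = c * ∑ i, W i * z i := by
      rw [Finset.mul_sum]
      refine Finset.sum_congr rfl fun i _ => ?_
      simp only [Pi.smul_apply, smul_eq_mul]
      ring
    have h2 : ∑ i, W i * z i = g z := by
      rw [hg_expand z]
      exact Finset.sum_congr rfl fun i _ => mul_comm _ _
    rw [h1, h2, abs_mul, abs_of_pos hc]
    exact mul_le_mul_of_nonneg_left (habs_g z) hc.le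
  have hφW : φ (c • W) = c * p v := by
    rw [hφeq (c • W)]
    have h1 : ∑ i, (c • W) i * v i = c * ∑ i, W i * v i := by
      rw [Finset.mul_sum]
      refine Finset.sum_congr rfl fun i _ => ?_
      simp only [Pi.smul_apply, smul_eq_mul]
      ring
    have h2 : ∑ i, W i * v i = g v := by
      rw [hg_expand v]
      exact Finset.sum_congr rfl fun i _ => mul_comm _ _
    rw [h1, h2, hgv]
  have hkey : ∀ k ∈ Kc, u₀ + c * p v < φ k := by
    intro k hk
    have := hsep k hk (c • W) hcW
    rw [hφW] at this
    linarith
  -- the descent direction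
  refine ⟨(-(p v)⁻¹) • v, ?_, u₀ / p v, div_pos hu₀ hpv, ?_⟩
  · rw [map_smul_eq_mul, Real.norm_eq_abs, abs_neg, abs_of_pos (inv_pos.mpr hpv),
      inv_mul_cancel₀ hpv.ne']
  · intro t ht
    have hkt : a t ∈ Kc := subset_closure (subset_convexHull ℝ _ (mem_image_of_mem a ht))
    have h1 := hkey (a t) hkt
    rw [hφeq (a t)] at h1
    have h2 : ∑ i, a t i * ((-(p v)⁻¹) • v) i = (-(p v)⁻¹) * ∑ i, a t i * v i := by
      rw [Finset.mul_sum]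
      refine Finset.sum_congr rfl fun i _ => ?_
      simp only [Pi.smul_apply, smul_eq_mul]
      ring
    rw [h2]
    have hneg : (-(p v)⁻¹) < 0 := neg_lt_zero.mpr (inv_pos.mpr hpv)
    have h3 : (-(p v)⁻¹) * (∑ i, a t i * v i) ≤ (-(p v)⁻¹) * (u₀ + c * p v) :=
      (mul_le_mul_left_of_neg hneg).mpr h1.le
    have h4 : (-(p v)⁻¹) * (u₀ + c * p v) = -c - u₀ / p v := by
      field_simp
      ring
    linarith

lemma lemA (a : T → (Fin n → ℝ)) (ha : Continuous a)
    (p : Seminorm ℝ (Fin n → ℝ)) (hp : ∀ x, p x = 0 → x = 0) (bbar : C(T, ℝ))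
    {y : Fin n → ℝ} (hy : 0 < fSup a bbar y) {c c' : ℝ} (hc : 0 < c) (hcc' : c < c')
    (hdesc : ∀ w, fSup a bbar y - c * p (w - y) ≤ max (fSup a bbar w) 0) :
    ∃ u ∈ convexHull ℝ (a '' maxIdx a bbar y), dualNorm p u ≤ ENNReal.ofReal c' := by
  haveI : Nonempty T := nonempty_T_of_pos hy
  by_contra hcon
  push_neg at hcon
  have hcon' : ∀ u ∈ convexHull ℝ (a '' maxIdx a bbar y), ENNReal.ofReal c' < dualNorm p u :=
    fun u hu => hcon u hu
  obtain ⟨d, hpd, δ, hδ, hdJ⟩ := exists_descent_dir a ha p hp bbar hy hc hcc' hcon'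
  -- main claim: descent along d
  have hclaim : ∃ s : ℝ, 0 < s ∧ 0 < fSup a bbar (y + s • d) ∧
      fSup a bbar (y + s • d) < fSup a bbar y - c * s := by
    by_contra hno
    push_neg at hno
    -- continuity neighborhood
    have hmap : Continuous fun s : ℝ => fSup a bbar (y + s • d) := by
      apply (fSup_cont a ha bbar).comp
      exact continuous_const.add (continuous_id.smul continuous_const)
    have hopen : IsOpen {s : ℝ | 0 < fSup a bbar (y + s • d)} :=
      isOpen_lt continuous_const hmap
    have h0mem : (0:ℝ) ∈ {s : ℝ | 0 < fSup a bbar (y + s • d)} := by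
      simp only [mem_setOf_eq, zero_smul, add_zero]
      exact hy
    obtain ⟨ε, hε, hball⟩ := Metric.isOpen_iff.mp hopen 0 h0mem
    set s₁ := ε/2 with hs₁
    have hs₁pos : 0 < s₁ := by positivity
    have hs₁mem : ∀ s : ℝ, 0 < s → s ≤ s₁ → 0 < fSup a bbar (y + s • d) := by
      intro s h1 h2
      apply hball
      rw [Metric.mem_ball, Real.dist_eq, sub_zero, abs_of_pos h1]
      linarith
    set sk : ℕ → ℝ := fun k => s₁ / (k + 1) with hsk
    have hsk_pos : ∀ k, 0 < sk k := fun k => by positivity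
    have hsk_le : ∀ k, sk k ≤ s₁ := fun k => by
      rw [hsk]
      apply div_le_self hs₁pos.le
      have : (0:ℝ) ≤ (k:ℝ) := Nat.cast_nonneg k
      linarith
    have hineq : ∀ k, fSup a bbar y - c * sk k ≤ fSup a bbar (y + sk k • d) := fun k =>
      hno (sk k) (hsk_pos k) (hs₁mem _ (hsk_pos k) (hsk_le k))
    have hexists := fun k => exists_max a ha bbar (y + sk k • d)
    choose tk htk_eq htk_le using hexists
    obtain ⟨tstar, -, φs, hφmono, hφtend⟩ :=
      isCompact_univ.tendsto_subseq (fun k => mem_univ (tk k))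
    set g : T → ℝ := fun t => (∑ i, a t i * y i) - bbar t with hg
    set h : T → ℝ := fun t => ∑ i, a t i * d i with hh
    have hg_cont : Continuous g := cont_t a ha bbar y
    have hh_cont : Continuous h :=
      continuous_finset_sum _ fun i _ => ((continuous_apply i).comp ha).mul continuous_const
    have hval : ∀ k, g (tk k) + sk k * h (tk k) = fSup a bbar (y + sk k • d) := by
      intro k
      rw [← htk_eq k]
      have hexp : ∑ i, a (tk k) i * (y + sk k • d) i
          = (∑ i, a (tk k) i * y i) + sk k * ∑ i, a (tk k) i * d i := by
        rw [Finset.mul_sum, ← Finset.sum_add_distrib]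
        refine Finset.sum_congr rfl fun i _ => ?_
        have : (y + sk k • d) i = y i + sk k * d i := rfl
        rw [this]; ring
      rw [hexp, hg, hh]
      ring
    have hg_le : ∀ k, g (tk k) ≤ fSup a bbar y := fun k => le_fSup' a ha bbar y (tk k)
    have hh_ge : ∀ k, -c ≤ h (tk k) := by
      intro k
      have h1 := hineq k
      have h2 := hval k
      have h3 := hg_le k
      have h4 := hsk_pos k
      have h5 : -c * sk k ≤ sk k * h (tk k) := by linarith
      have h6 := (mul_le_mul_iff_right₀ h4).mp (by linarith : sk k * (-c) ≤ sk k * h (tk k))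
      linarith
    have hsφ : Tendsto (fun k => sk (φs k)) atTop (𝓝 0) := by
      have h1 : Tendsto sk atTop (𝓝 0) := by
        have h2 : Tendsto (fun k : ℕ => s₁ * (1 / ((k:ℝ) + 1))) atTop (𝓝 (s₁ * 0)) :=
          tendsto_one_div_add_atTop_nhds_zero_nat.const_mul s₁
        rw [mul_zero] at h2
        refine h2.congr fun k => ?_
        rw [hsk]; field_simp
      exact h1.comp hφmono.tendsto_atTop
    have hh_lim : Tendsto (fun k => h (tk (φs k))) atTop (𝓝 (h tstar)) :=
      (hh_cont.tendsto tstar).comp hφtend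
    have hg_lim : Tendsto (fun k => g (tk (φs k))) atTop (𝓝 (g tstar)) :=
      (hg_cont.tendsto tstar).comp hφtend
    have hsum_lim : Tendsto (fun k => g (tk (φs k)) + sk (φs k) * h (tk (φs k)))
        atTop (𝓝 (g tstar + 0 * h tstar)) := hg_lim.add (hsφ.mul hh_lim)
    rw [zero_mul, add_zero] at hsum_lim
    have hlb_lim : Tendsto (fun k => fSup a bbar y - c * sk (φs k)) atTop
        (𝓝 (fSup a bbar y - c * 0)) :=
      tendsto_const_nhds.sub (hsφ.const_mul c)
    rw [mul_zero, sub_zero] at hlb_lim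
    have hFy_le : fSup a bbar y ≤ g tstar := by
      refine le_of_tendsto_of_tendsto' hlb_lim hsum_lim fun k => ?_
      rw [hval (φs k)]
      exact hineq (φs k)
    have htstarJ : tstar ∈ maxIdx a bbar y :=
      le_antisymm (le_fSup' a ha bbar y tstar) hFy_le
    have hh_star : -c ≤ h tstar := ge_of_tendsto' hh_lim fun k => hh_ge (φs k)
    have hfinal := hdJ tstar htstarJ
    have : h tstar = ∑ i, a tstar i * d i := rfl
    rw [this] at hh_star
    linarith
  obtain ⟨s, hs, hFpos, hFlt⟩ := hclaim
  have hd := hdesc (y + s • d)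
  have h1 : (y + s • d) - y = s • d := by abel
  rw [h1, map_smul_eq_mul, Real.norm_eq_abs, abs_of_pos hs, hpd, mul_one] at hd
  rw [max_eq_left hFpos.le] at hd
  linarith

lemma exists_min (a : T → (Fin n → ℝ)) (ha : Continuous a) (p : Seminorm ℝ (Fin n → ℝ))
    (hp : ∀ x, p x = 0 → x = 0) (bbar : C(T, ℝ)) (x₀ : Fin n → ℝ) {c : ℝ} (hc : 0 < c) :
    ∃ y : Fin n → ℝ, ∀ w, max (fSup a bbar y) 0 + c * p (y - x₀)
      ≤ max (fSup a bbar w) 0 + c * p (w - x₀) := by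
  obtain ⟨m, hm, hmp⟩ := p_lower p hp
  set G : (Fin n → ℝ) → ℝ := fun w => max (fSup a bbar w) 0 + c * p (w - x₀) with hG
  have hGc : Continuous G := by
    apply Continuous.add
    · exact (fSup_cont a ha bbar).max continuous_const
    · exact continuous_const.mul ((p_cont p).comp (continuous_id.sub continuous_const))
  set R := G x₀ / (c * m) + 1 with hR
  have hGx₀ : 0 ≤ G x₀ := by
    apply add_nonneg (le_max_right _ _)
    exact mul_nonneg hc.le (apply_nonneg _ _)
  have hcm : 0 < c * m := mul_pos hc hm
  have hRpos : 0 < R := by positivity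
  obtain ⟨y, hyB, hy⟩ := (isCompact_closedBall x₀ R).exists_isMinOn
    ⟨x₀, Metric.mem_closedBall_self hRpos.le⟩ hGc.continuousOn
  have hymin : ∀ w ∈ Metric.closedBall x₀ R, G y ≤ G w := fun w hw => (isMinOn_iff.mp hy) w hw
  refine ⟨y, fun w => ?_⟩
  by_cases hw : w ∈ Metric.closedBall x₀ R
  · exact hymin w hw
  · have h1 : R < ‖w - x₀‖ := by
      rw [Metric.mem_closedBall, not_le, dist_eq_norm] at hw
      exact hw
    have h2 : c * m * ‖w - x₀‖ ≤ c * p (w - x₀) := by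
      have := hmp (w - x₀)
      nlinarith
    have h3 : G x₀ = (R - 1) * (c * m) := by
      rw [hR]
      field_simp
      ring
    have h4 : G x₀ < c * p (w - x₀) := by nlinarith
    have h5 : G x₀ ≤ G w := by
      have h6 : (0:ℝ) ≤ max (fSup a bbar w) 0 := le_max_right _ _
      have h7 : p (x₀ - x₀) = 0 := by rw [sub_self, map_zero]
      have h8 : G x₀ = max (fSup a bbar x₀) 0 + c * p (x₀ - x₀) := rfl
      have h9 : G w = max (fSup a bbar w) 0 + c * p (w - x₀) := rfl
      have h7' : c * p (x₀ - x₀) = 0 := by rw [h7, mul_zero]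
      rw [h8, h9]
      rw [h8] at h4
      linarith
    exact (hymin x₀ (Metric.mem_closedBall_self hRpos.le)).trans h5

lemma key_le (a : T → (Fin n → ℝ)) (ha : Continuous a) (p : Seminorm ℝ (Fin n → ℝ))
    (hp : ∀ x, p x = 0 → x = 0) (bbar : C(T, ℝ)) {x₀ : Fin n → ℝ}
    (hx : 0 < fSup a bbar x₀) {r' r : ℝ}
    (hM : (⨆ (x : Fin n → ℝ) (_ : 0 < fSup a bbar x),
        (dualDist0 p (convexHull ℝ (a '' maxIdx a bbar x)))⁻¹) < ENNReal.ofReal r')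
    (hrr : r' < r) :
    pDist p x₀ (feas a bbar) ≤ ENNReal.ofReal r * ENNReal.ofReal (fSup a bbar x₀) := by
  have hr'0 : 0 < r' := by
    by_contra hcon
    push_neg at hcon
    rw [ENNReal.ofReal_eq_zero.mpr hcon] at hM
    exact absurd hM (not_lt.mpr (zero_le))
  have hr0 : 0 < r := hr'0.trans hrr
  set c := r⁻¹ with hcdef
  have hc : 0 < c := inv_pos.mpr hr0
  set c' := r'⁻¹ with hc'def
  have hcc' : c < c' := by
    rw [hcdef, hc'def]
    exact inv_strictAnti₀ hr'0 hrr
  obtain ⟨y, hymin⟩ := exists_min a ha p hp bbar x₀ hc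
  rcases le_or_gt (fSup a bbar y) 0 with hFy | hFy
  · -- y is feasible
    have hyS : y ∈ feas a bbar := (mem_feas_iff a ha bbar y).mpr hFy
    have h1 := hymin x₀
    rw [sub_self, map_zero, mul_zero, add_zero, max_eq_left hx.le] at h1
    have h2 : c * p (y - x₀) ≤ fSup a bbar x₀ := by
      have := le_max_right (fSup a bbar y) 0
      linarith
    have hcr : c * r = 1 := inv_mul_cancel₀ hr0.ne'
    have h3 : p (x₀ - y) ≤ r * fSup a bbar x₀ := by
      have hpe : p (x₀ - y) = p (y - x₀) := by
        rw [← neg_sub, map_neg_eq_map]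
      rw [hpe]
      nlinarith [apply_nonneg p (y - x₀)]
    calc pDist p x₀ (feas a bbar) ≤ ENNReal.ofReal (p (x₀ - y)) := pDist_le_of_mem p hyS
      _ ≤ ENNReal.ofReal (r * fSup a bbar x₀) := ENNReal.ofReal_le_ofReal h3
      _ = ENNReal.ofReal r * ENNReal.ofReal (fSup a bbar x₀) := ENNReal.ofReal_mul hr0.le
  · exfalso
    have hdesc : ∀ w, fSup a bbar y - c * p (w - y) ≤ max (fSup a bbar w) 0 := by
      intro w
      have h1 := hymin w
      have htri : p (w - x₀) ≤ p (w - y) + p (y - x₀) := by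
        have heq : w - x₀ = (w - y) + (y - x₀) := by abel
        rw [heq]
        exact map_add_le_add p _ _
      have h2 : max (fSup a bbar y) 0 = fSup a bbar y := max_eq_left hFy.le
      have h3 := mul_le_mul_of_nonneg_left htri hc.le
      linarith
    obtain ⟨u, huK, hudN⟩ := lemA a ha p hp bbar hFy hc hcc' hdesc
    have hterm : (dualDist0 p (convexHull ℝ (a '' maxIdx a bbar y)))⁻¹ < ENNReal.ofReal r' := by
      refine lt_of_le_of_lt ?_ hM
      exact le_iSup₂ (f := fun x (_ : 0 < fSup a bbar x) =>
        (dualDist0 p (convexHull ℝ (a '' maxIdx a bbar x)))⁻¹) y hFy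
    have hdd_gt : ENNReal.ofReal c' < dualDist0 p (convexHull ℝ (a '' maxIdx a bbar y)) := by
      have h4 := ENNReal.inv_lt_iff_inv_lt.mp hterm
      rw [hc'def, ENNReal.ofReal_inv_of_pos hr'0]
      exact h4
    have hdd_le : dualDist0 p (convexHull ℝ (a '' maxIdx a bbar y)) ≤ dualNorm p u := by
      simp only [dualDist0]
      exact iInf₂_le u huK
    exact absurd (hdd_le.trans hudN) (not_le.mpr hdd_gt)

end HofAux

open HofAux in
/-- Theorem `Th_Aze_Cor_subdif` (i), Azé–Corvellec. For `b̄ ∈ dom F`,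
`Hof F(b̄) = sup_{f_{b̄}(x) > 0} d_*(0ₙ, conv{a_t : t ∈ J_{b̄}(x)})⁻¹`
(conventions: `d(z,∅) = +∞`, `1/+∞ = 0`, `0/0 = 0`, `sup ∅ = 0`). -/
theorem hofF_eq_sup_outside_points
    {n : ℕ} {T : Type*} [MetricSpace T] [CompactSpace T]
    (a : T → (Fin n → ℝ)) (ha : Continuous a)
    (p : Seminorm ℝ (Fin n → ℝ)) (hp : ∀ x, p x = 0 → x = 0)
    (bbar : C(T, ℝ)) (hdom : (feas a bbar).Nonempty) :
    hofF a p bbar =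
      ⨆ (x : Fin n → ℝ) (_ : 0 < fSup a bbar x),
        (dualDist0 p (convexHull ℝ (a '' maxIdx a bbar x)))⁻¹ := by
  apply le_antisymm
  · simp only [hofF]
    refine iSup_le fun x => ?_
    rw [denom_eq a ha bbar x]
    rcases le_or_gt (fSup a bbar x) 0 with hf | hf
    · have hx : x ∈ feas a bbar := (mem_feas_iff a ha bbar x).mpr hf
      rw [pDist_zero_of_mem p hx, ENNReal.zero_div]
      exact zero_le
    · rw [max_eq_left hf.le]
      by_contra hlt
      push_neg at hlt
      obtain ⟨r', hr'0, hMr', hr'N⟩ := ENNReal.lt_iff_exists_real_btwn.mp hlt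
      obtain ⟨r, hr0, hrr', hrN⟩ := ENNReal.lt_iff_exists_real_btwn.mp hr'N
      have hrr : r' < r := by
        by_contra hcon
        push_neg at hcon
        exact absurd (ENNReal.ofReal_le_ofReal hcon) (not_le.mpr hrr')
      have hkey := key_le a ha p hp bbar hf hMr' hrr
      have hflt : ENNReal.ofReal r * ENNReal.ofReal (fSup a bbar x)
          < pDist p x (feas a bbar) := by
        rw [ENNReal.lt_div_iff_mul_lt (Or.inl (ENNReal.ofReal_pos.mpr hf).ne')
          (Or.inl ENNReal.ofReal_ne_top)] at hrN
        exact hrN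
      exact absurd hkey (not_le.mpr hflt)
  · refine iSup₂_le fun x hx => ?_
    calc (dualDist0 p (convexHull ℝ (a '' maxIdx a bbar x)))⁻¹
        ≤ pDist p x (feas a bbar) / ENNReal.ofReal (fSup a bbar x) :=
          ratio_ge a ha p hp bbar hdom hx
      _ = pDist p x (feas a bbar) / infEdist bbar {b : C(T, ℝ) | x ∈ feas a b} := by
          rw [denom_eq a ha bbar x, max_eq_left hx.le]
      _ ≤ hofF a p bbar := by
          simp only [hofF]
          exact le_iSup (fun x => pDist p x (feas a bbar)
            / infEdist bbar {b : C(T, ℝ) | x ∈ feas a b}) x
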